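/- The classical value of the 3-fold parallel repetition of Feige's game equals 5/16: the maximum over all deterministic strategies (f,g) of the winning probability of (f,g) in G_F^{×3} is exactly 5/16. In particular, the deterministic strategy where on questions (x_1,x_2,x_3), (y_1,y_2,y_3) Alice answers a_1 = ⊥, a_2 = x_1 ∨ x_3, a_3 = ⊥ if x_1 = 0 and a_3 = 1 if x_1 = 1, and Bob answers b_1 = y_2 ∧ y_3, b_2 = ⊥, b_3 = y_2 if y_2 ∧ y_3 = 0 and b_3 = ⊥ if y_2 ∧ y_3 = 1, wins with probability exactly 5/16, and no deterministic strategy does better. -/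

import Mathlib

open BigOperators

/-- The winning predicate of the `n`-fold parallel repetition of Feige's game: on questions
`x, y : Fin n → Bool` and answers `a, b : Fin n → Option Bool` (`none` = `⊥`), the players
win iff in every coordinate `i`, `(a_i, b_i) = (⊥, x_i)` or `(a_i, b_i) = (y_i, ⊥)`. -/
def FeigeWinN {n : ℕ} (x y : Fin n → Bool) (a b : Fin n → Option Bool) : Prop :=
  ∀ i, (a i = none ∧ b i = some (x i)) ∨ (a i = some (y i) ∧ b i = none)

instance {n : ℕ} (x y : Fin n → Bool) (a b : Fin n → Option Bool) :
    Decidable (FeigeWinN x y a b) := by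
  unfold FeigeWinN; infer_instance

/-- Winning probability of a deterministic strategy `(f, g)` in the `3`-fold parallel
repetition of Feige's game. -/
noncomputable def winProb3 (f g : (Fin 3 → Bool) → (Fin 3 → Option Bool)) : ℝ :=
  (1 / 4 ^ 3 : ℝ) * ∑ x : Fin 3 → Bool, ∑ y : Fin 3 → Bool,
    (if FeigeWinN x y (f x) (g y) then (1 : ℝ) else 0)

/-- Alice's strategy: `a₁ = ⊥`, `a₂ = x₁ ∨ x₃`, `a₃ = ⊥` if `x₁ = 0` and `a₃ = 1` if `x₁ = 1`. -/
def aliceStrat3 (x : Fin 3 → Bool) : Fin 3 → Option Bool :=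
  ![none, some (x 0 || x 2), if x 0 then some true else none]

/-- Bob's strategy: `b₁ = y₂ ∧ y₃`, `b₂ = ⊥`, `b₃ = y₂` if `y₂ ∧ y₃ = 0` and `b₃ = ⊥` otherwise. -/
def bobStrat3 (y : Fin 3 → Bool) : Fin 3 → Option Bool :=
  ![some (y 1 && y 2), none, if y 1 && y 2 then none else some (y 1)]

/-! Sort the questions by the number `k` of symbols `⊥` in the answer. A win forces Bob's `⊥`s to
sit exactly on the complement of Alice's, so Alice's level `k` only meets Bob's level `3 - k`; and
an answer with `k` symbols `⊥` has at most `2 ^ k` winning partners, the other coordinates of the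
partner being read off the answer. Hence the wins at level `k` are bounded both by `2 ^ k` times
the size of Alice's level `k` and by `2 ^ (3 - k)` times the size of Bob's level `3 - k`. With `8`
questions on each side, a small integer program leaves at most `20` of the `64` question pairs,
and the given strategy wins exactly `20` of them. -/

open Finset

namespace Feige

variable {n : ℕ}

abbrev Strategy (n : ℕ) := (Fin n → Bool) → Fin n → Option Bool

def botSet (a : Fin n → Option Bool) : Finset (Fin n) := {i | a i = none}

theorem _root_.FeigeWinN.symm {x y : Fin n → Bool} {a b : Fin n → Option Bool}
    (h : FeigeWinN x y a b) : FeigeWinN y x b a :=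
  fun i => (h i).symm.imp And.symm And.symm

theorem _root_.FeigeWinN.botSet_eq_compl {x y : Fin n → Bool} {a b : Fin n → Option Bool}
    (h : FeigeWinN x y a b) : botSet b = (botSet a)ᶜ := by
  ext i
  rcases h i with ⟨ha, hb⟩ | ⟨ha, hb⟩ <;> simp [botSet, ha, hb]

theorem _root_.FeigeWinN.card_botSet {x y : Fin n → Bool} {a b : Fin n → Option Bool}
    (h : FeigeWinN x y a b) : #(botSet b) = n - #(botSet a) := by
  rw [h.botSet_eq_compl, card_compl, Fintype.card_fin]

/-- A winning `y` agrees with `a` off `botSet a`, so it is determined by its values on `botSet a`. -/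
theorem card_winning_partners_le (x : Fin n → Bool) (a : Fin n → Option Bool)
    (g : Strategy n) : #{y | FeigeWinN x y a (g y)} ≤ 2 ^ #(botSet a) := by
  calc #{y | FeigeWinN x y a (g y)}
      ≤ #(univ : Finset (botSet a → Bool)) := by
        refine card_le_card_of_injOn (fun y (i : botSet a) => y i) (fun _ _ => mem_univ _) ?_
        intro y₁ h₁ y₂ h₂ hy
        funext i
        by_cases hi : a i = none
        · exact congrFun hy ⟨i, by simp [botSet, hi]⟩
        · simp only [coe_filter, mem_univ, true_and, Set.mem_ofPred_eq] at h₁ h₂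
          rcases h₁ i, h₂ i with ⟨⟨ha₁, -⟩ | ⟨ha₁, -⟩, ⟨ha₂, -⟩ | ⟨ha₂, -⟩⟩ <;>
            simp_all
    _ = 2 ^ #(botSet a) := by simp

def levelCount (f : Strategy n) (k : ℕ) : ℕ := #{x | #(botSet (f x)) = k}

def winCount (f g : Strategy n) : ℕ := ∑ x, #{y | FeigeWinN x y (f x) (g y)}

def levelWins (f g : Strategy n) (k : ℕ) : ℕ :=
  ∑ x with #(botSet (f x)) = k, #{y | FeigeWinN x y (f x) (g y)}

theorem card_botSet_mem_range (a : Fin n → Option Bool) : #(botSet a) ∈ range (n + 1) :=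
  mem_range_succ_iff.2 <| (card_le_univ _).trans_eq (Fintype.card_fin n)

theorem sum_levelCount (f : Strategy n) : ∑ k ∈ range (n + 1), levelCount f k = 2 ^ n := by
  simp only [levelCount]
  rw [← card_eq_sum_card_fiberwise fun x _ => card_botSet_mem_range (f x)]
  simp

theorem sum_levelWins (f g : Strategy n) :
    ∑ k ∈ range (n + 1), levelWins f g k = winCount f g :=
  sum_fiberwise_of_maps_to (fun x _ => card_botSet_mem_range (f x)) _

theorem levelWins_le_left (f g : Strategy n) (k : ℕ) :
    levelWins f g k ≤ levelCount f k * 2 ^ k := by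
  rw [levelCount, ← smul_eq_mul, ← sum_const]
  refine sum_le_sum fun x hx => ?_
  rw [← (mem_filter.1 hx).2]
  exact card_winning_partners_le x (f x) g

/-- Double counting: a win at level `k` has Bob's answer at level `n - k`. -/
theorem levelWins_le_right (f g : Strategy n) (k : ℕ) :
    levelWins f g k ≤ levelCount g (n - k) * 2 ^ (n - k) := by
  set A : Finset (Fin n → Bool) := {x | #(botSet (f x)) = k}
  set B : Finset (Fin n → Bool) := {y | #(botSet (g y)) = n - k}
  have hwin : ∀ x ∈ A, #{y | FeigeWinN x y (f x) (g y)} = #(B.bipartiteAbove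
      (fun x y => FeigeWinN x y (f x) (g y)) x) := by
    intro x hx
    congr 1
    ext y
    simp only [bipartiteAbove, B, mem_filter, mem_univ, true_and, iff_and_self]
    intro h
    rw [h.card_botSet, (mem_filter.1 hx).2]
  calc levelWins f g k
      = ∑ y ∈ B, #(A.bipartiteBelow (fun x y => FeigeWinN x y (f x) (g y)) y) := by
        rw [levelWins, sum_congr rfl hwin, sum_card_bipartiteAbove_eq_sum_card_bipartiteBelow]
    _ ≤ ∑ y ∈ B, 2 ^ (n - k) := by
        refine sum_le_sum fun y hy => ?_
        rw [← (mem_filter.1 hy).2]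
        refine (card_le_card fun x hx => ?_).trans (card_winning_partners_le y (g y) f)
        simp only [bipartiteBelow, mem_filter] at hx
        simpa using hx.2.symm
    _ = levelCount g (n - k) * 2 ^ (n - k) := by rw [sum_const, smul_eq_mul, levelCount]

/-- The level bounds alone only give `64 / 3`; integrality of the level counts brings it to `20`. -/
theorem winCount_le_twenty (f g : Strategy 3) : winCount f g ≤ 20 := by
  have hf := sum_levelCount f
  have hg := sum_levelCount g
  rw [← sum_levelWins]
  simp only [sum_range_succ, sum_range_zero, zero_add] at hf hg ⊢
  have l₀ := levelWins_le_left f g 0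
  have l₁ := levelWins_le_left f g 1
  have l₂ := levelWins_le_left f g 2
  have l₃ := levelWins_le_left f g 3
  have r₀ := levelWins_le_right f g 0
  have r₁ := levelWins_le_right f g 1
  have r₂ := levelWins_le_right f g 2
  have r₃ := levelWins_le_right f g 3
  norm_num at l₀ l₁ l₂ l₃ r₀ r₁ r₂ r₃ hf hg
  omega

theorem winProb3_eq (f g : Strategy 3) : winProb3 f g = winCount f g / 64 := by
  simp only [winProb3, winCount, sum_boole, Nat.cast_sum]
  ring

theorem winCount_aliceStrat3_bobStrat3 : winCount aliceStrat3 bobStrat3 = 20 := by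
  decide

end Feige

open Feige

/-- The classical value of the `3`-fold parallel repetition of Feige's game equals `5/16`:
no deterministic strategy wins with probability greater than `5/16`, and the concrete
strategy above achieves exactly `5/16`. -/
theorem feige_three_fold_classical_value :
    (∀ f g : (Fin 3 → Bool) → (Fin 3 → Option Bool), winProb3 f g ≤ 5 / 16)
    ∧ winProb3 aliceStrat3 bobStrat3 = 5 / 16 := by
  refine ⟨fun f g => ?_, ?_⟩
  · rw [winProb3_eq]
    have h : (winCount f g : ℝ) ≤ 20 := by exact_mod_cast winCount_le_twenty f g
    linarith
  · rw [winProb3_eq, winCount_aliceStrat3_bobStrat3]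
    norm_num
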